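/- Let D > 0 be real, b ∈ ℂ, A = D + |b|², and let e(u) = |u|²·A − 2·Re(conj(u)·b) + 1 for u ∈ ℂ. Then the infimum over u ∈ ℂ and ρ ∈ (0, ∞) of ρ·e(u) − log ρ equals 1 − log(1 + |b|²/D), and it is attained exactly at u* = b/A and ρ* = 1 + |b|²/D. -/

import Mathlib

/-!
Completing the square in `u` gives `e(u) = A |u - b/A|² + D/A`, and `D/A = 1/s` with
`s = 1 + |b|²/D`. Hence `ρ e(u) - log ρ = ρ A |u - b/A|² + (ρ/s - log ρ)`: the first term is
nonnegative and vanishes only at `u = b/A`, and `ρ/s - log ρ ≥ 1 - log s` with equality only at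
`ρ = s`, which is `log x ≤ x - 1` for `x = ρ/s`.
-/

/-- The per-user mean square error for receiver weight `u`:
`e(u) = |u|² A - 2 Re(conj u · b) + 1`. -/
noncomputable def mseFun (A : ℝ) (b : ℂ) (u : ℂ) : ℝ :=
  ‖u‖ ^ 2 * A - 2 * (starRingEnd ℂ u * b).re + 1

open Real

theorem one_sub_log_le_div_sub_log {s ρ : ℝ} (hs : 0 < s) (hρ : 0 < ρ) :
    1 - log s ≤ ρ / s - log ρ := by
  have h := log_le_sub_one_of_pos (div_pos hρ hs)
  rw [log_div hρ.ne' hs.ne'] at h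
  linarith

theorem div_sub_log_eq_one_sub_log_iff {s ρ : ℝ} (hs : 0 < s) (hρ : 0 < ρ) :
    ρ / s - log ρ = 1 - log s ↔ ρ = s := by
  refine ⟨fun h => ?_, fun h => by rw [h, div_self hs.ne']⟩
  by_contra hne
  have hlt := log_lt_sub_one_of_pos (div_pos hρ hs) (by rwa [ne_eq, div_eq_one_iff_eq hs.ne'])
  rw [log_div hρ.ne' hs.ne'] at hlt
  linarith

theorem mseFun_eq_mul_norm_sub_sq_add {A : ℝ} (hA : A ≠ 0) (b u : ℂ) :
    mseFun A b u = A * ‖u - b / (A : ℂ)‖ ^ 2 + (1 - ‖b‖ ^ 2 / A) := by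
  simp only [mseFun, Complex.sq_norm, Complex.normSq_apply, Complex.sub_re, Complex.sub_im,
    Complex.div_re, Complex.div_im, Complex.mul_re, Complex.ofReal_re,
    Complex.ofReal_im, Complex.conj_re, Complex.conj_im]
  field_simp
  ring

theorem mul_mseFun_sub_log_eq {D : ℝ} (hD : 0 < D) (b u : ℂ) (ρ : ℝ) :
    ρ * mseFun (D + ‖b‖ ^ 2) b u - log ρ =
      ρ * (D + ‖b‖ ^ 2) * ‖u - b / ((D + ‖b‖ ^ 2 : ℝ) : ℂ)‖ ^ 2 +
        (ρ / (1 + ‖b‖ ^ 2 / D) - log ρ) := by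
  have hA : D + ‖b‖ ^ 2 ≠ 0 := by positivity
  rw [mseFun_eq_mul_norm_sub_sq_add hA]
  field_simp
  ring

/-- Let `D > 0`, `b ∈ ℂ`, `A = D + |b|²` and `e(u) = |u|² A - 2 Re(conj u · b) + 1`.
The infimum over `u ∈ ℂ` and `ρ ∈ (0, ∞)` of `ρ · e(u) - log ρ` equals
`1 - log (1 + |b|² / D)`, and it is attained exactly at `u* = b / A` and
`ρ* = 1 + |b|² / D`. -/
theorem wmmse_inner_infimum (D : ℝ) (hD : 0 < D) (b : ℂ) :
    (∀ u : ℂ, ∀ ρ : ℝ, 0 < ρ →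
      1 - Real.log (1 + ‖b‖ ^ 2 / D) ≤ ρ * mseFun (D + ‖b‖ ^ 2) b u - Real.log ρ) ∧
    ((1 + ‖b‖ ^ 2 / D) * mseFun (D + ‖b‖ ^ 2) b (b / ((D + ‖b‖ ^ 2 : ℝ) : ℂ)) -
        Real.log (1 + ‖b‖ ^ 2 / D) = 1 - Real.log (1 + ‖b‖ ^ 2 / D)) ∧
    (∀ u : ℂ, ∀ ρ : ℝ, 0 < ρ →
      (ρ * mseFun (D + ‖b‖ ^ 2) b u - Real.log ρ = 1 - Real.log (1 + ‖b‖ ^ 2 / D) ↔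
        u = b / ((D + ‖b‖ ^ 2 : ℝ) : ℂ) ∧ ρ = 1 + ‖b‖ ^ 2 / D)) := by
  have hs : 0 < 1 + ‖b‖ ^ 2 / D := by positivity
  have hA : 0 < D + ‖b‖ ^ 2 := by positivity
  have hlower : ∀ u : ℂ, ∀ ρ : ℝ, 0 < ρ →
      1 - log (1 + ‖b‖ ^ 2 / D) ≤ ρ * mseFun (D + ‖b‖ ^ 2) b u - log ρ := fun u ρ hρ => by
    rw [mul_mseFun_sub_log_eq hD]
    exact le_add_of_nonneg_of_le (by positivity) (one_sub_log_le_div_sub_log hs hρ)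
  have hiff : ∀ u : ℂ, ∀ ρ : ℝ, 0 < ρ →
      (ρ * mseFun (D + ‖b‖ ^ 2) b u - log ρ = 1 - log (1 + ‖b‖ ^ 2 / D) ↔
        u = b / ((D + ‖b‖ ^ 2 : ℝ) : ℂ) ∧ ρ = 1 + ‖b‖ ^ 2 / D) := fun u ρ hρ => by
    have hsq_eq_zero : ρ * (D + ‖b‖ ^ 2) * ‖u - b / ((D + ‖b‖ ^ 2 : ℝ) : ℂ)‖ ^ 2 = 0 ↔
        u = b / ((D + ‖b‖ ^ 2 : ℝ) : ℂ) := by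
      simp [hρ.ne', hA.ne', sub_eq_zero]
    have hsq_nonneg : 0 ≤ ρ * (D + ‖b‖ ^ 2) * ‖u - b / ((D + ‖b‖ ^ 2 : ℝ) : ℂ)‖ ^ 2 := by
      positivity
    have hρ_term := one_sub_log_le_div_sub_log hs hρ
    rw [mul_mseFun_sub_log_eq hD, ← hsq_eq_zero, ← div_sub_log_eq_one_sub_log_iff hs hρ]
    constructor
    · intro h
      constructor <;> linarith
    · rintro ⟨h₁, h₂⟩
      linarith
  exact ⟨hlower, (hiff _ _ hs).2 ⟨rfl, rfl⟩, hiff⟩
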